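/- arXiv:1311.2863 — 2 statements merged into one kernel-verified Lean document; each statement's English description precedes it below -/
import Mathlib

section
/- Suppose G is an open set in ℝⁿ. Let 0 < τ, δ < 1 and 1 ≤ p < ∞ be given. Then there is a constant κ = κ(n, τ) ≥ 1 such that the inequality |u|_{A^{δ,p}_κ(G)} ≤ (√n)^{n/p + δ} |u|_{W^{δ,p}_τ(G)} holds for every u ∈ L¹(G). -/
open MeasureTheory Metric Set
open scoped ENNReal NNReal BigOperators

noncomputable section

/-- Euclidean `n`-space. -/
abbrev Eucl (n : ℕ) : Type := EuclideanSpace ℝ (Fin n)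

/-- `D` is a `c`-John domain (bounded or unbounded): an open connected set such that each
pair of points can be joined by a rectifiable curve, parametrized by arc length
(formalized as a `1`-Lipschitz parametrization on `[0, ℓ]`), along which
`dist(γ t, ∂D) ≥ min{t, ℓ - t}/c`. -/
def IsJohnDomain (n : ℕ) (c : ℝ) (D : Set (Eucl n)) : Prop :=
  IsOpen D ∧ IsConnected D ∧
    ∀ x₁ ∈ D, ∀ x₂ ∈ D, ∃ ℓ : ℝ, 0 ≤ ℓ ∧ ∃ γ : ℝ → Eucl n,
      γ 0 = x₁ ∧ γ ℓ = x₂ ∧ (∀ t ∈ Icc (0:ℝ) ℓ, γ t ∈ D) ∧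
      LipschitzOnWith 1 γ (Icc 0 ℓ) ∧
      ∀ t ∈ Icc (0:ℝ) ℓ, min t (ℓ - t) / c ≤ infDist (γ t) (frontier D)

/-- The ball `B(x, τ·dist(x, ∂G))`; by convention, if `∂G = ∅` (i.e. `G = ℝⁿ`)
it is all of `ℝⁿ`. -/
def tauBall (n : ℕ) (τ : ℝ) (G : Set (Eucl n)) (x : Eucl n) : Set (Eucl n) :=
  {y : Eucl n | edist x y < ENNReal.ofReal τ * EMetric.infEdist x (frontier G)}

/-- The fractional kernel `|u x - u y|^p / |x - y|^(n + δp)` as an extended real. -/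
def fracKernel (n : ℕ) (δ p : ℝ) (u : Eucl n → ℝ) (x y : Eucl n) : ℝ≥0∞ :=
  ENNReal.ofReal (|u x - u y| ^ p / dist x y ^ ((n : ℝ) + δ * p))

/-- The `p`-th power of the seminorm `|u|_{W^{δ,p}_τ(G)}`. -/
def fracEnergyTau (n : ℕ) (δ τ p : ℝ) (G : Set (Eucl n)) (u : Eucl n → ℝ) : ℝ≥0∞ :=
  ∫⁻ x in G, ∫⁻ y in tauBall n τ G x, fracKernel n δ p u x y ∂volume ∂volume

/-- The `p`-th power of the seminorm `|u|_{W^{δ,p}(G)}`. -/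
def fracEnergy (n : ℕ) (δ p : ℝ) (G : Set (Eucl n)) (u : Eucl n → ℝ) : ℝ≥0∞ :=
  ∫⁻ x in G, ∫⁻ y in G, fracKernel n δ p u x y ∂volume ∂volume

/-- The fractional `(δ,p)`-capacity of a compact set `K ⊆ G`:
`inf |u|_{W^{δ,p}(G)}^p` over `u ∈ C₀(G)` with `u ≥ 1` on `K`. -/
def fracCap (n : ℕ) (δ p : ℝ) (K G : Set (Eucl n)) : ℝ≥0∞ :=
  ⨅ (u : Eucl n → ℝ) (_ : Continuous u) (_ : HasCompactSupport u) (_ : tsupport u ⊆ G)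
    (_ : ∀ x ∈ K, 1 ≤ u x), fracEnergy n δ p G u

/-- The fractional `(δ,q,p)`-Hardy inequality holds in `G` with constant `C`. -/
def HasFracHardy (n : ℕ) (δ p q C : ℝ) (G : Set (Eucl n)) : Prop :=
  ∀ u : Eucl n → ℝ, Continuous u → HasCompactSupport u → tsupport u ⊆ G →
    (∫⁻ x in G, ENNReal.ofReal
        (|u x| ^ q / infDist x (frontier G) ^ (q * (δ + n * (1/q - 1/p)))) ∂volume)
      ≤ ENNReal.ofReal C * fracEnergy n δ p G u ^ (q / p)

/-- The closed axis-parallel cube with center `z` and half side length `r`. -/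
def cube (n : ℕ) (z : Eucl n) (r : ℝ) : Set (Eucl n) :=
  {x : Eucl n | ∀ i, |x i - z i| ≤ r}

/-- The quantity `|Q|^(-1-δ/n) ∫_Q |u - u_Q|` for the cube `Q = cube n z r`. -/
def aTerm (n : ℕ) (δ : ℝ) (u : Eucl n → ℝ) (z : Eucl n) (r : ℝ) : ℝ :=
  ((volume (cube n z r)).toReal) ^ (-(1:ℝ) - δ / n) *
    ∫ x in cube n z r, |u x - ⨍ y in cube n z r, u y ∂volume| ∂volume

/-- The seminorm `|u|_{A^{δ,p}_κ(G)}`: the supremum, over families `𝒬` of pairwise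
disjoint cubes `Q` (given by center-halfside pairs) with `κQ ⊆ G`, of the `L^p(G)`
norm of `∑_{Q ∈ 𝒬} (|Q|^(-1-δ/n) ∫_Q |u - u_Q|) χ_Q`. -/
def ASeminorm (n : ℕ) (κ δ p : ℝ) (G : Set (Eucl n)) (u : Eucl n → ℝ) : ℝ≥0∞ :=
  ⨆ (𝒬 : Set (Eucl n × ℝ)) (_ : ∀ c ∈ 𝒬, 0 < c.2 ∧ cube n c.1 (κ * c.2) ⊆ G)
    (_ : ∀ c ∈ 𝒬, ∀ c' ∈ 𝒬, c ≠ c' → cube n c.1 c.2 ∩ cube n c'.1 c'.2 = ∅),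
    (∫⁻ x in G,
        (∑' c : 𝒬, (cube n (c : Eucl n × ℝ).1 (c : Eucl n × ℝ).2).indicator
          (fun _ => ENNReal.ofReal (aTerm n δ u (c : Eucl n × ℝ).1 (c : Eucl n × ℝ).2)) x) ^ p
      ∂volume) ^ (1 / p)

/-- `Q` is a closed dyadic cube in `ℝⁿ`. -/
def IsDyadicCube (n : ℕ) (Q : Set (Eucl n)) : Prop :=
  ∃ (k : ℤ) (z : Fin n → ℤ),
    Q = {x : Eucl n | ∀ i, (z i : ℝ) * (2:ℝ) ^ k ≤ x i ∧ x i ≤ ((z i : ℝ) + 1) * (2:ℝ) ^ k}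

/-- `W` is a Whitney decomposition of the proper open set `G`: a countable family of
closed dyadic cubes with pairwise disjoint interiors whose union is `G`, with
`diam Q ≤ dist(Q, ∂G) ≤ 4 diam Q` for each cube `Q ∈ W`. -/
def IsWhitneyDecomposition (n : ℕ) (G : Set (Eucl n)) (W : Set (Set (Eucl n))) : Prop :=
  W.Countable ∧ (∀ Q ∈ W, IsDyadicCube n Q) ∧ ⋃₀ W = G ∧
    (W.Pairwise fun Q R => interior Q ∩ interior R = ∅) ∧
    ∀ Q ∈ W, (∀ x ∈ Q, Metric.diam Q ≤ infDist x (frontier G)) ∧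
      ∃ x ∈ Q, infDist x (frontier G) ≤ 4 * Metric.diam Q

/-- `lam` is an upper Assouad-type covering exponent for `E`: there is `C > 0` such
that for every `x ∈ E` and all `0 < r < R < 2 diam E`, the set `E ∩ B(x,R)` can be
covered by at most `C (R/r)^lam` balls centered in `E` of radius `r`. -/
def UpperAssouadBound (n : ℕ) (E : Set (Eucl n)) (lam : ℝ) : Prop :=
  ∃ C : ℝ, 0 < C ∧ ∀ x ∈ E, ∀ r R : ℝ, 0 < r → r < R →
    ENNReal.ofReal R < 2 * EMetric.diam E →
    ∃ F : Finset (Eucl n), ↑F ⊆ E ∧ (F.card : ℝ) ≤ C * (R / r) ^ lam ∧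
      E ∩ ball x R ⊆ ⋃ y ∈ F, ball y r

/-- The upper Assouad dimension of `E`. -/
def upperAssouadDim (n : ℕ) (E : Set (Eucl n)) : ℝ :=
  sInf {lam : ℝ | 0 ≤ lam ∧ UpperAssouadBound n E lam}

/-- `lam` is a lower Assouad-type exponent for `E`: there is `C > 0` such that for
every `x ∈ E` and all `0 < r < R < 2 diam E`, at least `C (R/r)^lam` balls centered
in `E` of radius `r` are needed to cover `E ∩ B(x,R)`. -/
def LowerAssouadBound (n : ℕ) (E : Set (Eucl n)) (lam : ℝ) : Prop :=
  ∃ C : ℝ, 0 < C ∧ ∀ x ∈ E, ∀ r R : ℝ, 0 < r → r < R →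
    ENNReal.ofReal R < 2 * EMetric.diam E →
    ∀ F : Finset (Eucl n), ↑F ⊆ E → (E ∩ ball x R ⊆ ⋃ y ∈ F, ball y r) →
      C * (R / r) ^ lam ≤ (F.card : ℝ)

/-- The lower Assouad dimension of `E`. -/
def lowerAssouadDim (n : ℕ) (E : Set (Eucl n)) : ℝ :=
  sSup {lam : ℝ | 0 ≤ lam ∧ LowerAssouadBound n E lam}

end

/-!
Take `κ` with `τ (κ - 1) > 2 √n`. If `κQ ⊆ G`, then every `x ∈ Q` is at distance at least
`(κ - 1) r` from `∂G`, while `|x - y| ≤ diam Q = 2 r √n` for `x, y ∈ Q`; hence `Q × Q` lies in the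
domain of integration of `|u|_{W^{δ,p}_τ(G)}`. On one cube, `|u x - u_Q|` is at most the mean of
`|u x - u y|` over `y ∈ Q`, so Jensen's inequality on `Q × Q` together with `|x - y| ≤ diam Q` gives
`|Q| (|Q|^(-1-δ/n) ∫_Q |u - u_Q|)^p ≤ (√n)^(n+δp) ∫_Q ∫_Q |u x - u y|^p / |x - y|^(n+δp)`.
Summing over the disjoint cubes of the family proves the inequality.
-/

open Function

section MeanOscillation

variable {α E : Type*} [MeasurableSpace α] {μ : Measure α}
  [NormedAddCommGroup E] [NormedSpace ℝ E] [CompleteSpace E]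

theorem lintegral_rpow_le_measure_univ_rpow_mul {p : ℝ} (hp : 1 ≤ p) {f : α → ℝ≥0∞}
    (hf : AEMeasurable f μ) :
    (∫⁻ a, f a ∂μ) ^ p ≤ μ univ ^ (p - 1) * ∫⁻ a, f a ^ p ∂μ := by
  have hp0 : 0 < p := by linarith
  have holder := ENNReal.lintegral_mul_norm_pow_le (hf.pow_const p)
    (aemeasurable_const (b := (1 : ℝ≥0∞))) (by positivity : 0 ≤ 1 / p)
    (sub_nonneg.2 ((div_le_one hp0).2 hp)) (add_sub_cancel _ _)
  simp only [← ENNReal.rpow_mul, mul_one_div_cancel hp0.ne', ENNReal.rpow_one,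
    ENNReal.one_rpow, mul_one, lintegral_const, one_mul] at holder
  calc (∫⁻ a, f a ∂μ) ^ p
      ≤ ((∫⁻ a, f a ^ p ∂μ) ^ (1 / p) * μ univ ^ (1 - 1 / p)) ^ p :=
        ENNReal.rpow_le_rpow holder hp0.le
    _ = μ univ ^ (p - 1) * ∫⁻ a, f a ^ p ∂μ := by
        rw [ENNReal.mul_rpow_of_nonneg _ _ hp0.le, ← ENNReal.rpow_mul, ← ENNReal.rpow_mul,
          one_div_mul_cancel hp0.ne', ENNReal.rpow_one, sub_mul, one_div_mul_cancel hp0.ne',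
          one_mul, mul_comm]

theorem enorm_sub_average_le [IsFiniteMeasure μ] [NeZero μ] {f : α → E} (hf : Integrable f μ)
    (x : α) : ‖f x - ⨍ y, f y ∂μ‖ₑ ≤ (μ univ)⁻¹ * ∫⁻ y, ‖f x - f y‖ₑ ∂μ := by
  have hν : Integrable f ((μ univ)⁻¹ • μ) := hf.smul_measure (ENNReal.inv_ne_top.2 (NeZero.ne _))
  calc ‖f x - ⨍ y, f y ∂μ‖ₑ = ‖∫ y, (f x - f y) ∂((μ univ)⁻¹ • μ)‖ₑ := by
        rw [integral_sub (integrable_const _) hν, integral_const, average_eq']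
        simp
    _ ≤ (μ univ)⁻¹ * ∫⁻ y, ‖f x - f y‖ₑ ∂μ := by
        rw [← smul_eq_mul, ← lintegral_smul_measure]
        exact enorm_integral_le_lintegral_enorm _

theorem lintegral_enorm_sub_average_rpow_le [IsFiniteMeasure μ] {p : ℝ} (hp : 1 ≤ p)
    {f : α → E} (hf : Integrable f μ) :
    (∫⁻ x, ‖f x - ⨍ y, f y ∂μ‖ₑ ∂μ) ^ p ≤
      μ univ ^ (p - 2) * ∫⁻ x, ∫⁻ y, ‖f x - f y‖ₑ ^ p ∂μ ∂μ := by
  have hp0 : 0 < p := by linarith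
  rcases eq_zero_or_neZero μ with rfl | hμ
  · simp [ENNReal.zero_rpow_of_pos hp0]
  have hV0 : μ univ ≠ 0 := NeZero.ne _
  have hVtop : μ univ ≠ ∞ := measure_ne_top _ _
  have hdiff : AEMeasurable (fun z : α × α => ‖f z.1 - f z.2‖ₑ) (μ.prod μ) :=
    (hf.aestronglyMeasurable.comp_fst.sub hf.aestronglyMeasurable.comp_snd).enorm
  calc (∫⁻ x, ‖f x - ⨍ y, f y ∂μ‖ₑ ∂μ) ^ p
      ≤ ((μ univ)⁻¹ * ∫⁻ z, ‖f z.1 - f z.2‖ₑ ∂μ.prod μ) ^ p := by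
        rw [lintegral_prod _ hdiff, ← lintegral_const_mul' _ _ (ENNReal.inv_ne_top.2 hV0)]
        gcongr with x
        exact enorm_sub_average_le hf x
    _ ≤ μ univ ^ (-p) * ((μ univ * μ univ) ^ (p - 1) *
          ∫⁻ z, ‖f z.1 - f z.2‖ₑ ^ p ∂μ.prod μ) := by
        rw [ENNReal.mul_rpow_of_nonneg _ _ hp0.le, ENNReal.inv_rpow, ← ENNReal.rpow_neg,
          ← Measure.prod_prod, univ_prod_univ]
        gcongr
        exact lintegral_rpow_le_measure_univ_rpow_mul hp hdiff
    _ = μ univ ^ (p - 2) * ∫⁻ x, ∫⁻ y, ‖f x - f y‖ₑ ^ p ∂μ ∂μ := by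
        rw [lintegral_prod _ (hdiff.pow_const p), ENNReal.mul_rpow_of_nonneg _ _ (by linarith),
          ← mul_assoc, ← mul_assoc, ← ENNReal.rpow_add _ _ hV0 hVtop,
          ← ENNReal.rpow_add _ _ hV0 hVtop]
        ring_nf

end MeanOscillation

theorem rpow_tsum_indicator_of_pairwise_disjoint {ι α : Type*} {s : ι → Set α}
    (hs : Pairwise (Disjoint on s)) (f : ι → α → ℝ≥0∞) {p : ℝ} (hp : 0 < p) (x : α) :
    (∑' i, (s i).indicator (f i) x) ^ p = ∑' i, (s i).indicator (fun y => f i y ^ p) x := by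
  by_cases hx : ∃ j, x ∈ s j
  · obtain ⟨j, hj⟩ := hx
    have hother : ∀ i ≠ j, x ∉ s i := fun i hij hi => Set.disjoint_left.1 (hs hij) hi hj
    rw [tsum_eq_single j fun i hij => indicator_of_notMem (hother i hij) _,
      tsum_eq_single j fun i hij => indicator_of_notMem (hother i hij) _,
      indicator_of_mem hj, indicator_of_mem hj]
  · simp only [not_exists] at hx
    simp [indicator_of_notMem (hx _), ENNReal.zero_rpow_of_pos hp]

section Cube

variable {n : ℕ}

theorem measurableSet_cube (z : Eucl n) (r : ℝ) : MeasurableSet (cube n z r) := by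
  have hclosed : IsClosed (cube n z r) := by
    simp only [cube, ofPred_forall]
    exact isClosed_iInter fun i => isClosed_le (by fun_prop) continuous_const
  exact hclosed.measurableSet

theorem volume_cube (z : Eucl n) {r : ℝ} (hr : 0 ≤ r) :
    volume (cube n z r) = ENNReal.ofReal ((2 * r) ^ n) := by
  have hpre : cube n z r =
      WithLp.ofLp ⁻¹' Set.univ.pi fun i => Icc (z i - r) (z i + r) := by
    ext x
    simp only [cube, mem_preimage, mem_univ_pi, mem_Icc, mem_ofPred_eq, abs_sub_le_iff]
    exact forall_congr' fun i => ⟨fun h => ⟨by linarith, by linarith⟩,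
      fun h => ⟨by linarith, by linarith⟩⟩
  rw [hpre, (PiLp.volume_preserving_ofLp (Fin n)).measure_preimage
    (MeasurableSet.univ_pi fun i => measurableSet_Icc).nullMeasurableSet, volume_pi_pi]
  simp only [Real.volume_Icc, show ∀ i : Fin n, z i + r - (z i - r) = 2 * r from fun i => by ring,
    Finset.prod_const, Finset.card_univ, Fintype.card_fin]
  rw [ENNReal.ofReal_pow (by linarith)]

theorem ball_subset_cube {z x : Eucl n} {r ρ : ℝ} (hx : x ∈ cube n z r) :
    ball x ρ ⊆ cube n z (r + ρ) := fun w hw i => by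
  have hcoord : |w i - x i| ≤ dist w x := Real.dist_eq (w i) (x i) ▸ PiLp.dist_apply_le w x i
  linarith [abs_sub_le (w i) (x i) (z i), hx i, mem_ball.1 hw]

theorem dist_le_of_mem_cube {z x y : Eucl n} {r : ℝ} (hr : 0 ≤ r) (hx : x ∈ cube n z r)
    (hy : y ∈ cube n z r) : dist x y ≤ 2 * r * √n := by
  have hcoord : ∀ i, dist (x i) (y i) ≤ 2 * r := fun i => by
    rw [Real.dist_eq]
    linarith [abs_sub_le (x i) (z i) (y i), abs_sub_comm (z i) (y i), hx i, hy i]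
  rw [EuclideanSpace.dist_eq, ← Real.sqrt_sq (by positivity : 0 ≤ 2 * r),
    ← Real.sqrt_mul' _ (Nat.cast_nonneg n)]
  refine Real.sqrt_le_sqrt ?_
  calc ∑ i, dist (x i) (y i) ^ 2 ≤ ∑ _i : Fin n, (2 * r) ^ 2 :=
        Finset.sum_le_sum fun i _ => pow_le_pow_left₀ dist_nonneg (hcoord i) 2
    _ = (2 * r) ^ 2 * n := by simp [mul_comm]

theorem ofReal_le_infEDist_frontier {G : Set (Eucl n)} (hG : IsOpen G) {z x : Eucl n}
    {r ρ : ℝ} (hsub : cube n z (r + ρ) ⊆ G) (hx : x ∈ cube n z r) :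
    ENNReal.ofReal ρ ≤ infEDist x (frontier G) := by
  refine le_infEDist.2 fun w hw => ?_
  rw [edist_dist]
  refine ENNReal.ofReal_le_ofReal (not_lt.1 fun hlt => ?_)
  rw [hG.frontier_eq] at hw
  exact hw.2 (hsub (ball_subset_cube hx (mem_ball'.2 hlt)))

theorem mem_tauBall_of_mem_cube {τ κ r : ℝ} (hτ : 0 < τ) (hκ : 2 * √n < τ * (κ - 1))
    (hr : 0 < r) {G : Set (Eucl n)} (hG : IsOpen G) {z x y : Eucl n}
    (hsub : cube n z (κ * r) ⊆ G) (hx : x ∈ cube n z r) (hy : y ∈ cube n z r) :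
    y ∈ tauBall n τ G x := by
  have hfront : ENNReal.ofReal ((κ - 1) * r) ≤ infEDist x (frontier G) :=
    ofReal_le_infEDist_frontier hG (by rwa [show r + (κ - 1) * r = κ * r by ring]) hx
  have hgap : 0 < τ * ((κ - 1) * r) := by
    rw [← mul_assoc]; exact mul_pos ((by positivity : 0 ≤ 2 * √n).trans_lt hκ) hr
  calc edist x y = ENNReal.ofReal (dist x y) := edist_dist x y
    _ < ENNReal.ofReal τ * ENNReal.ofReal ((κ - 1) * r) := by
        rw [← ENNReal.ofReal_mul hτ.le, ENNReal.ofReal_lt_ofReal_iff hgap]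
        nlinarith [dist_le_of_mem_cube hr.le hx hy]
    _ ≤ ENNReal.ofReal τ * infEDist x (frontier G) := by gcongr

theorem enorm_sub_rpow_le_mul_fracKernel {δ p d : ℝ} (hp : 0 < p) (hE : 0 ≤ (n : ℝ) + δ * p)
    (u : Eucl n → ℝ) {x y : Eucl n} (hxy : dist x y ≤ d) :
    ‖u x - u y‖ₑ ^ p ≤ ENNReal.ofReal (d ^ ((n : ℝ) + δ * p)) * fracKernel n δ p u x y := by
  rw [Real.enorm_eq_ofReal_abs, ENNReal.ofReal_rpow_of_nonneg (abs_nonneg _) hp.le, fracKernel,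
    ← ENNReal.ofReal_mul (Real.rpow_nonneg (dist_nonneg.trans hxy) _)]
  refine ENNReal.ofReal_le_ofReal ?_
  rcases (dist_nonneg (x := x) (y := y)).eq_or_lt with hxy0 | hxy0
  · simp [dist_eq_zero.1 hxy0.symm, Real.zero_rpow hp.ne']
  · calc |u x - u y| ^ p
        = dist x y ^ ((n : ℝ) + δ * p) * (|u x - u y| ^ p / dist x y ^ ((n : ℝ) + δ * p)) := by
          rw [mul_div_cancel₀ _ (Real.rpow_pos_of_pos hxy0 _).ne']
      _ ≤ d ^ ((n : ℝ) + δ * p) * (|u x - u y| ^ p / dist x y ^ ((n : ℝ) + δ * p)) := by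
          gcongr

-- For `n = 0` both sides vanish: `√0 = 0`, and `δ * p / 0 = 0` makes the first factor `1`.
theorem ofReal_pow_rpow_mul_ofReal_rpow {s δ p : ℝ} (hs : 0 < s) (hδp : 0 < δ * p) :
    ENNReal.ofReal (s ^ n) ^ (-1 - δ * p / n) * ENNReal.ofReal ((s * √n) ^ ((n : ℝ) + δ * p)) =
      ENNReal.ofReal (√n ^ ((n : ℝ) + δ * p)) := by
  rcases n.eq_zero_or_pos with rfl | hn
  · simp [Real.zero_rpow hδp.ne']
  have hexp : (n : ℝ) * (-1 - δ * p / n) + ((n : ℝ) + δ * p) = 0 := by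
    field_simp
    ring
  rw [ENNReal.ofReal_rpow_of_pos (pow_pos hs n), ← ENNReal.ofReal_mul (by positivity),
    Real.mul_rpow hs.le (Real.sqrt_nonneg _), ← Real.rpow_natCast, ← Real.rpow_mul hs.le,
    ← mul_assoc, ← Real.rpow_add hs, hexp, Real.rpow_zero, one_mul]

theorem ofReal_aTerm_rpow_mul_volume_le {δ p r : ℝ} (hδ : 0 < δ) (hp : 1 ≤ p) (hr : 0 < r)
    {z : Eucl n} {u : Eucl n → ℝ} (hu : IntegrableOn u (cube n z r)) :
    ENNReal.ofReal (aTerm n δ u z r) ^ p * volume (cube n z r) ≤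
      ENNReal.ofReal (√n ^ ((n : ℝ) + δ * p)) *
        ∫⁻ x in cube n z r, ∫⁻ y in cube n z r, fracKernel n δ p u x y := by
  have hp0 : 0 < p := by linarith
  set Q := cube n z r
  set V := volume Q
  have hV : V = ENNReal.ofReal ((2 * r) ^ n) := volume_cube z hr.le
  have hV0 : V ≠ 0 := by rw [hV]; exact (ENNReal.ofReal_pos.2 (by positivity)).ne'
  have hVtop : V ≠ ∞ := by rw [hV]; exact ENNReal.ofReal_ne_top
  have hpow : ∀ a b : ℝ, V ^ a * V ^ b = V ^ (a + b) := fun a b =>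
    (ENNReal.rpow_add a b hV0 hVtop).symm
  have : IsFiniteMeasure (volume.restrict Q) := isFiniteMeasure_restrict.2 hVtop
  have hosc := lintegral_enorm_sub_average_rpow_le (μ := volume.restrict Q) hp hu
  rw [Measure.restrict_apply_univ] at hosc
  have haTerm : ENNReal.ofReal (aTerm n δ u z r) =
      V ^ (-1 - δ / n) * ∫⁻ x in Q, ‖u x - ⨍ y in Q, u y‖ₑ := by
    rw [aTerm, ENNReal.ofReal_mul (by positivity),
      ← ENNReal.ofReal_rpow_of_pos (ENNReal.toReal_pos hV0 hVtop), ENNReal.ofReal_toReal hVtop]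
    simp_rw [← Real.norm_eq_abs]
    congr 1
    exact ofReal_integral_norm_eq_lintegral_enorm (hu.sub (integrableOn_const hVtop))
  have hkernel : ∫⁻ x in Q, ∫⁻ y in Q, ‖u x - u y‖ₑ ^ p ≤
      ENNReal.ofReal ((2 * r * √n) ^ ((n : ℝ) + δ * p)) *
        ∫⁻ x in Q, ∫⁻ y in Q, fracKernel n δ p u x y := by
    rw [← lintegral_const_mul' _ _ ENNReal.ofReal_ne_top]
    refine setLIntegral_mono' (measurableSet_cube z r) fun x hx => ?_
    rw [← lintegral_const_mul' _ _ ENNReal.ofReal_ne_top]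
    exact setLIntegral_mono' (measurableSet_cube z r) fun y hy =>
      enorm_sub_rpow_le_mul_fracKernel hp0 (by positivity) u (dist_le_of_mem_cube hr.le hx hy)
  calc ENNReal.ofReal (aTerm n δ u z r) ^ p * V
      = V ^ ((-1 - δ / n) * p) * (∫⁻ x in Q, ‖u x - ⨍ y in Q, u y‖ₑ) ^ p * V := by
        rw [haTerm, ENNReal.mul_rpow_of_nonneg _ _ hp0.le, ← ENNReal.rpow_mul]
    _ ≤ V ^ ((-1 - δ / n) * p) * (V ^ (p - 2) * ∫⁻ x in Q, ∫⁻ y in Q, ‖u x - u y‖ₑ ^ p) * V := by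
        gcongr
    _ = V ^ (-1 - δ * p / n) * ∫⁻ x in Q, ∫⁻ y in Q, ‖u x - u y‖ₑ ^ p := by
        rw [← mul_assoc, hpow, mul_right_comm]
        conv_lhs => enter [1, 2]; rw [← ENNReal.rpow_one V]
        rw [hpow, show (-1 - δ / n) * p + (p - 2) + 1 = -1 - δ * p / n by ring]
    _ ≤ V ^ (-1 - δ * p / n) * (ENNReal.ofReal ((2 * r * √n) ^ ((n : ℝ) + δ * p)) *
          ∫⁻ x in Q, ∫⁻ y in Q, fracKernel n δ p u x y) := by
        gcongr
    _ = ENNReal.ofReal (√n ^ ((n : ℝ) + δ * p)) *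
          ∫⁻ x in Q, ∫⁻ y in Q, fracKernel n δ p u x y := by
        rw [← mul_assoc, hV, ofReal_pow_rpow_mul_ofReal_rpow (by linarith) (by positivity)]

end Cube

theorem lintegral_rpow_tsum_aTerm_indicator_le {n : ℕ} {τ κ δ p : ℝ} (hτ : 0 < τ)
    (hκ : 2 * √n < τ * (κ - 1)) (hδ : 0 < δ) (hp : 1 ≤ p) {G : Set (Eucl n)} (hG : IsOpen G)
    {u : Eucl n → ℝ} (hu : IntegrableOn u G) {𝒬 : Set (Eucl n × ℝ)}
    (h𝒬 : ∀ c ∈ 𝒬, 0 < c.2 ∧ cube n c.1 (κ * c.2) ⊆ G)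
    (hdisj : ∀ c ∈ 𝒬, ∀ c' ∈ 𝒬, c ≠ c' → cube n c.1 c.2 ∩ cube n c'.1 c'.2 = ∅) :
    ∫⁻ x in G, (∑' c : 𝒬, (cube n (c : Eucl n × ℝ).1 (c : Eucl n × ℝ).2).indicator
        (fun _ => ENNReal.ofReal (aTerm n δ u (c : Eucl n × ℝ).1 (c : Eucl n × ℝ).2)) x) ^ p
      ≤ ENNReal.ofReal (√n ^ ((n : ℝ) + δ * p)) * fracEnergyTau n δ τ p G u := by
  have hp0 : 0 < p := by linarith
  have hκ1 : 1 ≤ κ := by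
    nlinarith [(by positivity : 0 ≤ 2 * √n).trans_lt hκ]
  have hQG : ∀ c ∈ 𝒬, cube n c.1 c.2 ⊆ G := fun c hc x hx =>
    (h𝒬 c hc).2 fun i => (hx i).trans (le_mul_of_one_le_left (h𝒬 c hc).1.le hκ1)
  have hcount : 𝒬.Countable := by
    refine Set.PairwiseDisjoint.countable_of_nonempty_interior
      (s := fun c : Eucl n × ℝ => cube n c.1 c.2) (fun c hc c' hc' hne => ?_) fun c hc => ?_
    · exact Set.disjoint_iff_inter_eq_empty.2 (hdisj c hc c' hc' hne)
    · refine ⟨c.1, interior_mono (s := ball c.1 c.2) ?_ ?_⟩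
      · simpa using ball_subset_cube (ρ := c.2) (fun i => by simp : c.1 ∈ cube n c.1 0)
      · rw [isOpen_ball.interior_eq]
        exact mem_ball_self (h𝒬 c hc).1
  have : Countable 𝒬 := hcount.to_subtype
  set Q : 𝒬 → Set (Eucl n) := fun c => cube n (c : Eucl n × ℝ).1 (c : Eucl n × ℝ).2
  set a : 𝒬 → ℝ≥0∞ := fun c => ENNReal.ofReal (aTerm n δ u (c : Eucl n × ℝ).1 (c : Eucl n × ℝ).2)
  have hQm : ∀ c, MeasurableSet (Q c) := fun c => measurableSet_cube _ _
  have hQdisj : Pairwise (Disjoint on Q) := fun c c' hne =>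
    Set.disjoint_iff_inter_eq_empty.2 (hdisj c c.2 c' c'.2 (Subtype.coe_injective.ne hne))
  calc ∫⁻ x in G, (∑' c, (Q c).indicator (fun _ => a c) x) ^ p
      = ∫⁻ x in G, ∑' c, (Q c).indicator (fun _ => a c ^ p) x :=
        lintegral_congr fun x => rpow_tsum_indicator_of_pairwise_disjoint hQdisj _ hp0 x
    _ = ∑' c, a c ^ p * volume (Q c) := by
        rw [lintegral_tsum fun c => (measurable_const.indicator (hQm c)).aemeasurable]
        refine tsum_congr fun c => ?_
        rw [lintegral_indicator_const (hQm c), Measure.restrict_apply (hQm c),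
          inter_eq_left.2 (hQG c c.2)]
    _ ≤ ∑' c, ENNReal.ofReal (√n ^ ((n : ℝ) + δ * p)) *
          ∫⁻ x in Q c, ∫⁻ y in tauBall n τ G x, fracKernel n δ p u x y := by
        refine ENNReal.tsum_le_tsum fun c => (ofReal_aTerm_rpow_mul_volume_le hδ hp
          (h𝒬 c c.2).1 (hu.mono_set (hQG c c.2))).trans ?_
        refine mul_le_mul_right (setLIntegral_mono' (hQm c) fun x hx => ?_) _
        exact lintegral_mono_set fun y hy =>
          mem_tauBall_of_mem_cube hτ hκ (h𝒬 c c.2).1 hG (h𝒬 c c.2).2 hx hy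
    _ = ENNReal.ofReal (√n ^ ((n : ℝ) + δ * p)) *
          ∫⁻ x in ⋃ c, Q c, ∫⁻ y in tauBall n τ G x, fracKernel n δ p u x y := by
        rw [ENNReal.tsum_mul_left, lintegral_iUnion hQm hQdisj]
    _ ≤ ENNReal.ofReal (√n ^ ((n : ℝ) + δ * p)) * fracEnergyTau n δ τ p G u := by
        gcongr
        exact lintegral_mono_set (iUnion_subset fun c => hQG c c.2)

/-- There is `κ = κ(n,τ) ≥ 1` such that, for every open `G ⊆ ℝⁿ`,
`0 < τ, δ < 1`, `1 ≤ p < ∞` and every `u ∈ L¹(G)`,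
`|u|_{A^{δ,p}_κ(G)} ≤ (√n)^{n/p + δ} |u|_{W^{δ,p}_τ(G)}`. -/
theorem statement7 (n : ℕ) (τ : ℝ) (hτ : τ ∈ Ioo (0:ℝ) 1) :
    ∃ κ : ℝ, 1 ≤ κ ∧
      ∀ δ p : ℝ, δ ∈ Ioo (0:ℝ) 1 → 1 ≤ p →
        ∀ G : Set (Eucl n), IsOpen G →
          ∀ u : Eucl n → ℝ, IntegrableOn u G volume →
            ASeminorm n κ δ p G u
              ≤ ENNReal.ofReal (Real.sqrt n ^ ((n:ℝ) / p + δ)) *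
                  fracEnergyTau n δ τ p G u ^ (1 / p) := by
  refine ⟨1 + 2 * (√n + 1) / τ, le_add_of_nonneg_right (by positivity [hτ.1]),
    fun δ p hδ hp G hG u hu => ?_⟩
  have hκ : 2 * √n < τ * (1 + 2 * (√n + 1) / τ - 1) := by
    rw [add_sub_cancel_left, mul_div_cancel₀ _ hτ.1.ne']
    linarith
  refine iSup₂_le fun 𝒬 h𝒬 => iSup_le fun hdisj => ?_
  calc _ ≤ (ENNReal.ofReal (√n ^ ((n : ℝ) + δ * p)) * fracEnergyTau n δ τ p G u) ^ (1 / p) :=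
        ENNReal.rpow_le_rpow (lintegral_rpow_tsum_aTerm_indicator_le hτ.1 hκ hδ.1 hp hG hu
          h𝒬 hdisj) (by positivity)
    _ = _ := by
        rw [ENNReal.mul_rpow_of_nonneg _ _ (by positivity),
          ENNReal.ofReal_rpow_of_nonneg (by positivity) (by positivity),
          ← Real.rpow_mul (Real.sqrt_nonneg _)]
        congr 3
        field_simp
end

section
/- Suppose G is an open set in ℝⁿ and ω: G → [0,∞) is measurable. Let 0 < δ < 1 and 0 < p ≤ q < ∞. Then the following conditions are equivalent: (A) there is a constant C₁ > 0 such that ∫_G |u(x)|^q ω(x) dx ≤ C₁ |u|_{W^{δ,p}(G)}^q for every u ∈ C₀(G); (B) there is a constant C₂ > 0 such that ∫_K ω(x) dx ≤ C₂ · cap_{δ,p}(K, G)^{q/p} for every compact set K in G. In the implication from (A) to (B) one can take C₂ = C₁, and in the implication from (B) to (A) one can take C₁ = C₂ · 2^{3q + 2q/p} (1 − 2^{−p})^{−q/p}. -/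
open MeasureTheory Metric Set
open scoped ENNReal NNReal BigOperators

/-! Testing (A) on the functions admissible for `cap_{δ,p}(K, G)` gives (B). For the converse,
split `u` along the level sets `K_j = {2^j ≤ |u|}`: since `|u|^q ≤ 2^{(j+1)q}` on `K_j \ K_{j+1}`,
(B) bounds `∫ |u|^q ω` by `C₂ Σ_j 2^{(j+1)q} cap(K_j)^{q/p} ≤ C₂ 2^q (Σ_j 2^{jp} cap(K_j))^{q/p}`,
using `q/p ≥ 1`. The truncation `φ_j(u)`, which is `1` on `K_j` and `0` where `|u| ≤ 2^{j-1}`, is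
admissible for `K_j`, and the pointwise estimate
`Σ_j 2^{jp} |φ_j(a) - φ_j(b)|^p ≤ 2^{p+2} (1 - 2^{-p})⁻¹ |a - b|^p`
(a geometric series over the small scales plus at most two terms at the large ones) bounds
`Σ_j 2^{jp} cap(K_j)` by a multiple of `|u|_{W^{δ,p}(G)}^p`. -/

lemma ENNReal.tsum_rpow_le_rpow_tsum {ι : Type*} {θ : ℝ} (hθ : 1 ≤ θ) (f : ι → ℝ≥0∞) :
    ∑' i, f i ^ θ ≤ (∑' i, f i) ^ θ := by
  have hsplit : ∀ x : ℝ≥0∞, x ^ θ = x ^ (θ - 1) * x := fun x => by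
    conv_lhs => rw [← sub_add_cancel θ 1]
    rw [ENNReal.rpow_add_of_nonneg _ _ (by linarith) zero_le_one, ENNReal.rpow_one]
  calc ∑' i, f i ^ θ = ∑' i, f i ^ (θ - 1) * f i := tsum_congr fun i => hsplit _
    _ ≤ ∑' i, (∑' i, f i) ^ (θ - 1) * f i := by
        gcongr with i
        exact ENNReal.le_tsum i
    _ = (∑' i, f i) ^ θ := by rw [ENNReal.tsum_mul_left, ← hsplit]

namespace FracCapacity

lemma eq_log_or_eq_log_add_one {M : ℝ} (hM : 0 < M) {j : ℤ} (hlo : 2 ^ (j - 1) < M)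
    (hhi : M < 2 ^ (j + 1)) : j = Int.log 2 M ∨ j = Int.log 2 M + 1 := by
  have h1 : j - 1 ≤ Int.log 2 M :=
    (Int.zpow_le_iff_le_log (b := 2) one_lt_two hM).1 (mod_cast hlo.le)
  have h2 : Int.log 2 M < j + 1 :=
    (Int.lt_zpow_iff_log_lt (b := 2) one_lt_two hM).1 (mod_cast hhi)
  omega

lemma tsum_indicator_Iic_ofReal_zpow {t : ℝ} (ht : 1 < t) (j₀ : ℤ) :
    ∑' j : ℤ, (Iic j₀).indicator (fun j => ENNReal.ofReal (t ^ j)) j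
      = ENNReal.ofReal (t ^ j₀ / (1 - t⁻¹)) := by
  have ht₀ : 0 < t := one_pos.trans ht
  have hinj : Function.Injective (fun k : ℕ => j₀ - k) := fun k l h => by simpa using h
  have hsupp : Function.support ((Iic j₀).indicator (fun j => ENNReal.ofReal (t ^ j)))
      ⊆ range (fun k : ℕ => j₀ - k) := by
    intro j hj
    have hj₀ : j ≤ j₀ := by
      by_contra h
      exact hj (indicator_of_notMem (show j ∉ Iic j₀ from h) _)
    exact ⟨(j₀ - j).toNat, show j₀ - ((j₀ - j).toNat : ℤ) = j by omega⟩
  have hterm : ∀ k : ℕ, (Iic j₀).indicator (fun j => ENNReal.ofReal (t ^ j)) (j₀ - k)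
      = ENNReal.ofReal (t ^ j₀) * ENNReal.ofReal t⁻¹ ^ k := by
    intro k
    rw [indicator_of_mem (by simp), zpow_sub₀ ht₀.ne', zpow_natCast, div_eq_mul_inv, ← inv_pow,
      ENNReal.ofReal_mul (by positivity), ENNReal.ofReal_pow (by positivity)]
  have hinv : t⁻¹ < 1 := inv_lt_one_of_one_lt₀ ht
  rw [← hinj.tsum_eq hsupp, tsum_congr hterm, ENNReal.tsum_mul_left, ENNReal.tsum_geometric,
    ← ENNReal.ofReal_one, ← ENNReal.ofReal_sub _ (by positivity),
    ← ENNReal.ofReal_inv_of_pos (by linarith), ← ENNReal.ofReal_mul (by positivity),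
    div_eq_mul_inv]

lemma lintegral_ofReal_rpow_abs_mul_le {X : Type*} [MeasurableSpace X] (μ : Measure X)
    {u : X → ℝ} (hu : Measurable u) {q : ℝ} (hq : 0 < q) (g : X → ℝ≥0∞) :
    ∫⁻ x, ENNReal.ofReal (|u x| ^ q) * g x ∂μ
      ≤ ∑' j : ℤ, ENNReal.ofReal ((2 ^ (j + 1)) ^ q) * ∫⁻ x in {x | 2 ^ j ≤ |u x|}, g x ∂μ := by
  set A : ℤ → Set X := fun j => {x | 2 ^ j ≤ |u x|} \ {x | 2 ^ (j + 1) ≤ |u x|}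
  have hsupp : Function.support (fun x => ENNReal.ofReal (|u x| ^ q) * g x) ⊆ ⋃ j, A j := by
    intro x hx
    have hux : 0 < |u x| := abs_pos.2 fun h => hx (by simp [h, Real.zero_rpow hq.ne'])
    have hlo := Int.zpow_log_le_self (R := ℝ) (b := 2) one_lt_two hux
    have hhi := Int.lt_zpow_succ_log_self (R := ℝ) (b := 2) one_lt_two |u x|
    push_cast at hlo hhi
    exact mem_iUnion.2 ⟨Int.log 2 |u x|, hlo, not_le.2 hhi⟩
  have hA : ∀ j, MeasurableSet (A j) := fun j =>
    (measurableSet_le measurable_const hu.abs).diff (measurableSet_le measurable_const hu.abs)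
  calc ∫⁻ x, ENNReal.ofReal (|u x| ^ q) * g x ∂μ
      = ∫⁻ x in ⋃ j, A j, ENNReal.ofReal (|u x| ^ q) * g x ∂μ :=
        (setLIntegral_eq_of_support_subset hsupp).symm
    _ ≤ ∑' j, ∫⁻ x in A j, ENNReal.ofReal (|u x| ^ q) * g x ∂μ := lintegral_iUnion_le _ _
    _ ≤ _ := by
        gcongr with j
        calc ∫⁻ x in A j, ENNReal.ofReal (|u x| ^ q) * g x ∂μ
            ≤ ∫⁻ x in A j, ENNReal.ofReal ((2 ^ (j + 1)) ^ q) * g x ∂μ := by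
              refine setLIntegral_mono' (hA j) fun x hx => ?_
              gcongr
              exact (not_le.1 hx.2).le
          _ ≤ _ := by
              rw [lintegral_const_mul' _ _ ENNReal.ofReal_ne_top]
              gcongr
              exact diff_subset

lemma setOf_zpow_le_abs_subset_tsupport {X : Type*} [TopologicalSpace X] (u : X → ℝ) (j : ℤ) :
    {x | (2 : ℝ) ^ j ≤ |u x|} ⊆ tsupport u := fun x hx =>
  subset_tsupport _ fun h0 => by
    simp only [mem_setOf_eq, h0, abs_zero] at hx
    exact (zpow_pos two_pos j).not_ge hx

lemma isCompact_setOf_zpow_le_abs {X : Type*} [TopologicalSpace X] {u : X → ℝ}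
    (hu : Continuous u) (hcs : HasCompactSupport u) (j : ℤ) : IsCompact {x | (2 : ℝ) ^ j ≤ |u x|} :=
  hcs.of_isClosed_subset (isClosed_le continuous_const hu.abs)
    (setOf_zpow_le_abs_subset_tsupport u j)

section DyadicTrunc

noncomputable def dyadicTrunc (j : ℤ) (t : ℝ) : ℝ := min 1 (max 0 (|t| / 2 ^ (j - 1) - 1))

variable (j : ℤ)

lemma dyadicTrunc_nonneg (t : ℝ) : 0 ≤ dyadicTrunc j t :=
  le_min zero_le_one (le_max_left _ _)

lemma dyadicTrunc_le_one (t : ℝ) : dyadicTrunc j t ≤ 1 := min_le_left _ _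

lemma dyadicTrunc_eq_one {t : ℝ} (ht : 2 ^ j ≤ |t|) : dyadicTrunc j t = 1 := by
  have h : 2 ≤ |t| / 2 ^ (j - 1) := by
    rwa [le_div_iff₀ (by positivity), ← zpow_one_add₀ two_ne_zero, add_sub_cancel]
  rw [dyadicTrunc, max_eq_right (by linarith), min_eq_left (by linarith)]

lemma dyadicTrunc_eq_zero {t : ℝ} (ht : |t| ≤ 2 ^ (j - 1)) : dyadicTrunc j t = 0 := by
  have h : |t| / 2 ^ (j - 1) ≤ 1 := (div_le_one (by positivity)).2 ht
  rw [dyadicTrunc, max_eq_left (by linarith), min_eq_right zero_le_one]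

lemma dyadicTrunc_zero : dyadicTrunc j 0 = 0 :=
  dyadicTrunc_eq_zero j (by rw [abs_zero]; positivity)

lemma continuous_dyadicTrunc : Continuous (dyadicTrunc j) := by
  unfold dyadicTrunc
  fun_prop

lemma abs_dyadicTrunc_sub_le (a b : ℝ) :
    |dyadicTrunc j a - dyadicTrunc j b| ≤ |(|a| - |b|)| / 2 ^ (j - 1) := by
  set x := |a| / 2 ^ (j - 1) - 1
  set y := |b| / 2 ^ (j - 1) - 1
  have hmin := abs_min_sub_min_le_max (1 : ℝ) (max 0 x) 1 (max 0 y)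
  rw [sub_self, abs_zero, max_eq_right (abs_nonneg (max 0 x - max 0 y))] at hmin
  have hmax : |max 0 x - max 0 y| ≤ |x - y| := by
    simpa only [max_comm _ (0 : ℝ)] using abs_max_sub_max_le_abs x y 0
  have hxy : x - y = (|a| - |b|) / 2 ^ (j - 1) := by ring
  rw [hxy, abs_div, abs_of_pos (zpow_pos two_pos (j - 1) : (0 : ℝ) < 2 ^ (j - 1))] at hmax
  exact hmin.trans hmax

lemma abs_dyadicTrunc_sub_le_one (a b : ℝ) : |dyadicTrunc j a - dyadicTrunc j b| ≤ 1 :=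
  abs_sub_le_of_nonneg_of_le (dyadicTrunc_nonneg j a) (dyadicTrunc_le_one j a)
    (dyadicTrunc_nonneg j b) (dyadicTrunc_le_one j b)

lemma lt_max_and_min_lt_of_dyadicTrunc_ne {a b : ℝ} (h : dyadicTrunc j a ≠ dyadicTrunc j b) :
    2 ^ (j - 1) < max |a| |b| ∧ min |a| |b| < 2 ^ j := by
  constructor
  · by_contra! hc
    exact h <| by rw [dyadicTrunc_eq_zero j ((le_max_left _ _).trans hc),
      dyadicTrunc_eq_zero j ((le_max_right _ _).trans hc)]
  · by_contra! hc
    exact h <| by rw [dyadicTrunc_eq_one j (hc.trans (min_le_left _ _)),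
      dyadicTrunc_eq_one j (hc.trans (min_le_right _ _))]

end DyadicTrunc

section PointwiseEstimate

variable {p : ℝ}

lemma one_sub_two_rpow_neg_pos (hp : 0 < p) : 0 < 1 - (2 : ℝ) ^ (-p) :=
  sub_pos.2 (Real.rpow_lt_one_of_one_lt_of_neg one_lt_two (neg_neg_of_pos hp))

lemma rpow_mul_rpow_abs_dyadicTrunc_sub_le (hp : 0 < p) (j : ℤ) (a b : ℝ) :
    (2 ^ j) ^ p * |dyadicTrunc j a - dyadicTrunc j b| ^ p ≤ (2 * |(|a| - |b|)|) ^ p := by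
  have hlip : 2 ^ j * |dyadicTrunc j a - dyadicTrunc j b| ≤ 2 * |(|a| - |b|)| :=
    calc 2 ^ j * |dyadicTrunc j a - dyadicTrunc j b|
        ≤ 2 ^ j * (|(|a| - |b|)| / 2 ^ (j - 1)) := by
          gcongr
          exact abs_dyadicTrunc_sub_le j a b
      _ = 2 * |(|a| - |b|)| := by
          rw [zpow_sub_one₀ two_ne_zero]
          field_simp
  rw [← Real.mul_rpow (by positivity) (abs_nonneg _)]
  exact Real.rpow_le_rpow (by positivity) hlip hp.le

lemma eq_log_max_or_of_dyadicTrunc_ne {j : ℤ} {a b : ℝ} (hj : |(|a| - |b|)| < 2 ^ (j - 1))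
    (h : dyadicTrunc j a ≠ dyadicTrunc j b) :
    j = Int.log 2 (max |a| |b|) ∨ j = Int.log 2 (max |a| |b|) + 1 := by
  obtain ⟨hlo, hmin⟩ := lt_max_and_min_lt_of_dyadicTrunc_ne j h
  have hgap : max |a| |b| = min |a| |b| + |(|a| - |b|)| := by
    rw [← max_sub_min_eq_abs']; ring
  have hhi : max |a| |b| < 2 ^ (j + 1) := by
    have : (2 : ℝ) ^ (j - 1) ≤ 2 ^ j := zpow_le_zpow_right₀ one_le_two (by omega)
    rw [zpow_add_one₀ two_ne_zero]
    linarith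
  exact eq_log_or_eq_log_add_one ((zpow_pos two_pos _).trans hlo) hlo hhi

lemma zpow_log_div_add_le (hp : 0 < p) {d e : ℝ} (hd : 0 < d) (hde : d ≤ e) :
    ((2 : ℝ) ^ p) ^ (Int.log 2 d + 1) / (1 - ((2 : ℝ) ^ p)⁻¹) + ((2 * d) ^ p + (2 * d) ^ p)
      ≤ 2 ^ (p + 2) / (1 - 2 ^ (-p)) * e ^ p := by
  have hr := one_sub_two_rpow_neg_pos hp
  have hscale : ((2 : ℝ) ^ p) ^ (Int.log 2 d + 1) ≤ (2 * d) ^ p := by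
    have h := Int.zpow_log_le_self (R := ℝ) (b := 2) one_lt_two hd
    push_cast at h
    rw [Real.rpow_zpow_comm two_pos.le, zpow_add_one₀ two_ne_zero, mul_comm]
    gcongr
  have hdp : 4 * (2 * d) ^ p ≤ 2 ^ (p + 2) * e ^ p := by
    rw [Real.mul_rpow zero_le_two hd.le, Real.rpow_add two_pos, Real.rpow_two]
    have : d ^ p ≤ e ^ p := Real.rpow_le_rpow hd.le hde hp.le
    nlinarith [Real.rpow_pos_of_pos two_pos p]
  rw [← Real.rpow_neg two_pos.le, div_add' _ _ _ (by linarith), div_mul_eq_mul_div,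
    div_le_div_iff_of_pos_right (by linarith)]
  nlinarith [Real.rpow_nonneg (by positivity : (0 : ℝ) ≤ 2 * d) p,
    Real.rpow_pos_of_pos two_pos (-p)]

lemma tsum_rpow_dyadicTrunc_sub_le (hp : 0 < p) (a b : ℝ) :
    ∑' j : ℤ, ENNReal.ofReal ((2 ^ j) ^ p * |dyadicTrunc j a - dyadicTrunc j b| ^ p)
      ≤ ENNReal.ofReal (2 ^ (p + 2) / (1 - 2 ^ (-p)) * |a - b| ^ p) := by
  set d := |(|a| - |b|)|
  rcases (abs_nonneg (|a| - |b|)).eq_or_lt with hd0 | hd0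
  · have hab : |a| = |b| := by linarith [abs_eq_zero.1 hd0.symm]
    have hzero : ∀ j : ℤ, dyadicTrunc j a = dyadicTrunc j b := fun j => by
      simp only [dyadicTrunc, hab]
    simp [hzero, Real.zero_rpow hp.ne']
  set j₀ := Int.log 2 d + 1
  set j₁ := Int.log 2 (max |a| |b|)
  set c := ENNReal.ofReal ((2 * d) ^ p)
  -- Below scale `2 ^ j₀` the terms form a geometric series; above it only `j₁, j₁ + 1` survive.
  have hterm : ∀ j : ℤ,
      ENNReal.ofReal ((2 ^ j) ^ p * |dyadicTrunc j a - dyadicTrunc j b| ^ p)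
        ≤ (Iic j₀).indicator (fun j => ENNReal.ofReal ((2 ^ p) ^ j)) j
          + ((if j = j₁ then c else 0) + (if j = j₁ + 1 then c else 0)) := by
    intro j
    by_cases hj : j ≤ j₀
    · rw [indicator_of_mem (show j ∈ Iic j₀ from hj), Real.rpow_zpow_comm two_pos.le]
      refine le_add_right (ENNReal.ofReal_le_ofReal (mul_le_of_le_one_right (by positivity) ?_))
      exact Real.rpow_le_one (abs_nonneg _) (abs_dyadicTrunc_sub_le_one j a b) hp.le
    by_cases hΔ : dyadicTrunc j a = dyadicTrunc j b
    · simp [hΔ, Real.zero_rpow hp.ne']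
    have hdj : d < 2 ^ (j - 1) := by
      have h := Int.lt_zpow_succ_log_self (R := ℝ) (b := 2) one_lt_two d
      push_cast at h
      exact h.trans_le (zpow_le_zpow_right₀ one_le_two (by omega))
    refine le_add_left (le_trans (ENNReal.ofReal_le_ofReal
      (rpow_mul_rpow_abs_dyadicTrunc_sub_le hp j a b)) ?_)
    rcases eq_log_max_or_of_dyadicTrunc_ne hdj hΔ with h | h <;> simp [h, c, d, j₁]
  calc _ ≤ ∑' j : ℤ, ((Iic j₀).indicator (fun j => ENNReal.ofReal ((2 ^ p) ^ j)) j
          + ((if j = j₁ then c else 0) + (if j = j₁ + 1 then c else 0))) :=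
        ENNReal.tsum_le_tsum hterm
    _ = ENNReal.ofReal (((2 : ℝ) ^ p) ^ j₀ / (1 - ((2 : ℝ) ^ p)⁻¹)) + (c + c) := by
        rw [ENNReal.tsum_add, ENNReal.tsum_add, tsum_ite_eq, tsum_ite_eq,
          tsum_indicator_Iic_ofReal_zpow (Real.one_lt_rpow one_lt_two hp)]
    _ ≤ _ := by
        have hinv : ((2 : ℝ) ^ p)⁻¹ < 1 := inv_lt_one_of_one_lt₀ (Real.one_lt_rpow one_lt_two hp)
        simp only [c]
        rw [← ENNReal.ofReal_add (by positivity) (by positivity),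
          ← ENNReal.ofReal_add (div_nonneg (by positivity) (by linarith)) (by positivity)]
        exact ENNReal.ofReal_le_ofReal
          (zpow_log_div_add_le hp hd0 (abs_abs_sub_abs_le_abs_sub a b))

end PointwiseEstimate

section Energy

variable {n : ℕ} {δ p : ℝ}

lemma fracKernel_eq_mul (v : Eucl n → ℝ) (x y : Eucl n) :
    fracKernel n δ p v x y
      = ENNReal.ofReal (|v x - v y| ^ p) * ENNReal.ofReal ((dist x y ^ ((n : ℝ) + δ * p))⁻¹) := by
  rw [fracKernel, div_eq_mul_inv, ENNReal.ofReal_mul (by positivity)]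

lemma measurable_fracKernel {v : Eucl n → ℝ} (hv : Measurable v) :
    Measurable fun z : Eucl n × Eucl n => fracKernel n δ p v z.1 z.2 := by
  unfold fracKernel
  have hd : Measurable fun z : Eucl n × Eucl n => dist z.1 z.2 := continuous_dist.measurable
  fun_prop

lemma tsum_mul_fracKernel_dyadicTrunc_le (hp : 0 < p) (u : Eucl n → ℝ) (x y : Eucl n) :
    ∑' j : ℤ, ENNReal.ofReal ((2 ^ j) ^ p) * fracKernel n δ p (dyadicTrunc j ∘ u) x y
      ≤ ENNReal.ofReal (2 ^ (p + 2) / (1 - 2 ^ (-p))) * fracKernel n δ p u x y := by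
  simp only [fracKernel_eq_mul, Function.comp_apply, ← mul_assoc]
  rw [ENNReal.tsum_mul_right]
  gcongr
  have hB : (0 : ℝ) ≤ 2 ^ (p + 2) / (1 - 2 ^ (-p)) :=
    div_nonneg (by positivity) (one_sub_two_rpow_neg_pos hp).le
  have h := tsum_rpow_dyadicTrunc_sub_le hp (u x) (u y)
  rw [ENNReal.ofReal_mul hB] at h
  simpa (disch := positivity) only [ENNReal.ofReal_mul] using h

lemma tsum_mul_fracEnergy_le {ι : Type*} [Countable ι] {v : ι → Eucl n → ℝ}
    (hv : ∀ i, Measurable (v i)) (c : ι → ℝ≥0∞) {C : ℝ≥0∞} (hC : C ≠ ⊤) (G : Set (Eucl n))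
    (u : Eucl n → ℝ)
    (h : ∀ x y, ∑' i, c i * fracKernel n δ p (v i) x y ≤ C * fracKernel n δ p u x y) :
    ∑' i, c i * fracEnergy n δ p G (v i) ≤ C * fracEnergy n δ p G u := by
  have hk := fun i => measurable_fracKernel (δ := δ) (p := p) (hv i)
  have hinner : ∀ i, Measurable fun x => ∫⁻ y in G, fracKernel n δ p (v i) x y :=
    fun i => (hk i).lintegral_prod_right'
  calc ∑' i, c i * fracEnergy n δ p G (v i)
      = ∑' i, ∫⁻ x in G, ∫⁻ y in G, c i * fracKernel n δ p (v i) x y := by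
        refine tsum_congr fun i => ?_
        rw [fracEnergy, ← lintegral_const_mul _ (hinner i)]
        refine lintegral_congr fun x => ?_
        exact (lintegral_const_mul _ ((hk i).comp measurable_prodMk_left)).symm
    _ = ∫⁻ x in G, ∑' i, ∫⁻ y in G, c i * fracKernel n δ p (v i) x y := by
        refine (lintegral_tsum fun i => ?_).symm
        exact (((hk i).const_mul (c i)).lintegral_prod_right').aemeasurable
    _ = ∫⁻ x in G, ∫⁻ y in G, ∑' i, c i * fracKernel n δ p (v i) x y := by
        refine lintegral_congr fun x => (lintegral_tsum fun i => ?_).symm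
        exact (((hk i).comp measurable_prodMk_left).const_mul (c i)).aemeasurable
    _ ≤ ∫⁻ x in G, ∫⁻ y in G, C * fracKernel n δ p u x y :=
        lintegral_mono fun x => lintegral_mono (h x)
    _ = C * fracEnergy n δ p G u := by
        simp only [lintegral_const_mul' _ _ hC, fracEnergy]

end Energy

section Capacity

variable {n : ℕ} {δ p q : ℝ} {G : Set (Eucl n)} {ω : Eucl n → ℝ}

lemma fracCap_le_fracEnergy {K : Set (Eucl n)} {v : Eucl n → ℝ} (hv : Continuous v)
    (hcs : HasCompactSupport v) (hvG : tsupport v ⊆ G) (hvK : ∀ x ∈ K, 1 ≤ v x) :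
    fracCap n δ p K G ≤ fracEnergy n δ p G v :=
  iInf_le_of_le v <| iInf_le_of_le hv <| iInf_le_of_le hcs <| iInf_le_of_le hvG <| iInf_le _ hvK

lemma le_map_fracCap {K : Set (Eucl n)} {F : ℝ≥0∞ → ℝ≥0∞} (hF : Continuous F) (hFm : Monotone F)
    (hFtop : F ⊤ = ⊤) {I : ℝ≥0∞}
    (h : ∀ v : Eucl n → ℝ, Continuous v → HasCompactSupport v → tsupport v ⊆ G →
      (∀ x ∈ K, 1 ≤ v x) → I ≤ F (fracEnergy n δ p G v)) :
    I ≤ F (fracCap n δ p K G) := by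
  simpa only [fracCap, hFm.map_iInf_of_continuousAt hF.continuousAt hFtop, Function.comp_def,
    le_iInf_iff] using h

lemma setLIntegral_le_mul_fracCap_rpow (hp : 0 < p) (hpq : p ≤ q) {C : ℝ} (hC : 0 < C)
    (hA : ∀ u : Eucl n → ℝ, Continuous u → HasCompactSupport u → tsupport u ⊆ G →
      (∫⁻ x in G, ENNReal.ofReal (|u x| ^ q * ω x) ∂volume)
        ≤ ENNReal.ofReal C * fracEnergy n δ p G u ^ (q / p))
    {K : Set (Eucl n)} (hK : IsCompact K) (hKG : K ⊆ G) :
    (∫⁻ x in K, ENNReal.ofReal (ω x) ∂volume)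
      ≤ ENNReal.ofReal C * fracCap n δ p K G ^ (q / p) := by
  have hθ : 0 < q / p := div_pos (hp.trans_le hpq) hp
  refine le_map_fracCap (F := fun t => ENNReal.ofReal C * t ^ (q / p))
    ((ENNReal.continuous_const_mul ENNReal.ofReal_ne_top).comp ENNReal.continuous_rpow_const) ?_ ?_
    fun v hv hcs hvG hvK => ?_
  · exact fun s t hst => by dsimp only; gcongr
  · simp [ENNReal.top_rpow_of_pos hθ, ENNReal.mul_top, hC]
  calc ∫⁻ x in K, ENNReal.ofReal (ω x)
      ≤ ∫⁻ x in K, ENNReal.ofReal (|v x| ^ q * ω x) := by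
        refine setLIntegral_mono' hK.measurableSet fun x hx => ?_
        rw [ENNReal.ofReal_mul (by positivity)]
        refine le_mul_of_one_le_left zero_le (ENNReal.one_le_ofReal.2 ?_)
        exact Real.one_le_rpow ((hvK x hx).trans (le_abs_self _)) (hp.trans_le hpq).le
    _ ≤ ∫⁻ x in G, ENNReal.ofReal (|v x| ^ q * ω x) := lintegral_mono_set hKG
    _ ≤ _ := hA v hv hcs hvG

lemma two_rpow_mul_rpow_le (hp : 0 < p) (hpq : p ≤ q) :
    (2 : ℝ) ^ q * (2 ^ (p + 2) / (1 - 2 ^ (-p))) ^ (q / p)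
      ≤ 2 ^ (3 * q + 2 * q / p) * (1 - 2 ^ (-p) : ℝ) ^ (-(q / p)) := by
  have hr := one_sub_two_rpow_neg_pos hp
  have hexp : (p + 2) * (q / p) = q + 2 * q / p := by field_simp
  rw [Real.div_rpow (by positivity) hr.le, ← Real.rpow_mul zero_le_two, hexp, div_eq_mul_inv,
    ← Real.rpow_neg hr.le, ← mul_assoc, ← Real.rpow_add two_pos]
  gcongr ?_ * _
  exact Real.rpow_le_rpow_of_exponent_le one_le_two (by linarith [hp.trans_le hpq])

lemma tsum_zpow_mul_fracCap_le (hp : 0 < p) {u : Eucl n → ℝ} (hu : Continuous u)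
    (hcs : HasCompactSupport u) (huG : tsupport u ⊆ G) :
    ∑' j : ℤ, ENNReal.ofReal ((2 ^ j) ^ p) * fracCap n δ p {x | (2 : ℝ) ^ j ≤ |u x|} G
      ≤ ENNReal.ofReal (2 ^ (p + 2) / (1 - 2 ^ (-p))) * fracEnergy n δ p G u := by
  refine le_trans (ENNReal.tsum_le_tsum fun j => ?_)
    (tsum_mul_fracEnergy_le (fun j => ((continuous_dyadicTrunc j).comp hu).measurable) _
      ENNReal.ofReal_ne_top G u (tsum_mul_fracKernel_dyadicTrunc_le hp u))
  gcongr
  exact fracCap_le_fracEnergy ((continuous_dyadicTrunc j).comp hu)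
    (hcs.comp_left (dyadicTrunc_zero j)) ((tsupport_comp_subset (dyadicTrunc_zero j) u).trans huG)
    fun x hx => (dyadicTrunc_eq_one j hx).ge

lemma lintegral_le_mul_tsum_fracCap_rpow (hp : 0 < p) (hpq : p ≤ q) {C : ℝ}
    (hB : ∀ K : Set (Eucl n), IsCompact K → K ⊆ G →
      (∫⁻ x in K, ENNReal.ofReal (ω x) ∂volume)
        ≤ ENNReal.ofReal C * fracCap n δ p K G ^ (q / p))
    {u : Eucl n → ℝ} (hu : Continuous u) (hcs : HasCompactSupport u) (huG : tsupport u ⊆ G) :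
    (∫⁻ x in G, ENNReal.ofReal (|u x| ^ q * ω x) ∂volume)
      ≤ ENNReal.ofReal C * ENNReal.ofReal (2 ^ q) * ∑' j : ℤ,
          (ENNReal.ofReal ((2 ^ j) ^ p) * fracCap n δ p {x | (2 : ℝ) ^ j ≤ |u x|} G) ^ (q / p) := by
  have hθ : 0 ≤ q / p := div_nonneg (hp.le.trans hpq) hp.le
  have hweight : ∀ j : ℤ, ENNReal.ofReal ((2 ^ (j + 1)) ^ q)
      = ENNReal.ofReal (2 ^ q) * ENNReal.ofReal ((2 ^ j) ^ p) ^ (q / p) := fun j => by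
    rw [ENNReal.ofReal_rpow_of_nonneg (by positivity) hθ,
      ← Real.rpow_mul (by positivity), mul_div_cancel₀ _ hp.ne', zpow_add_one₀ two_ne_zero,
      mul_comm, Real.mul_rpow zero_le_two (by positivity), ENNReal.ofReal_mul (by positivity)]
  calc ∫⁻ x in G, ENNReal.ofReal (|u x| ^ q * ω x)
      ≤ ∫⁻ x, ENNReal.ofReal (|u x| ^ q) * ENNReal.ofReal (ω x) := by
        simp only [fun x => ENNReal.ofReal_mul (Real.rpow_nonneg (abs_nonneg (u x)) q)]
        exact setLIntegral_le_lintegral _ _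
    _ ≤ ∑' j : ℤ, ENNReal.ofReal ((2 ^ (j + 1)) ^ q)
          * ∫⁻ x in {x | (2 : ℝ) ^ j ≤ |u x|}, ENNReal.ofReal (ω x) :=
        lintegral_ofReal_rpow_abs_mul_le volume hu.measurable (hp.trans_le hpq) _
    _ ≤ ∑' j : ℤ, ENNReal.ofReal ((2 ^ (j + 1)) ^ q)
          * (ENNReal.ofReal C * fracCap n δ p {x | (2 : ℝ) ^ j ≤ |u x|} G ^ (q / p)) := by
        gcongr with j
        exact hB _ (isCompact_setOf_zpow_le_abs hu hcs j)
          ((setOf_zpow_le_abs_subset_tsupport u j).trans huG)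
    _ = _ := by
        simp only [hweight, ENNReal.mul_rpow_of_nonneg _ _ hθ,
          ← ENNReal.tsum_mul_left]
        exact tsum_congr fun j => by ring

lemma lintegral_le_mul_fracEnergy_rpow (hp : 0 < p) (hpq : p ≤ q) {C : ℝ} (hC : 0 < C)
    (hB : ∀ K : Set (Eucl n), IsCompact K → K ⊆ G →
      (∫⁻ x in K, ENNReal.ofReal (ω x) ∂volume)
        ≤ ENNReal.ofReal C * fracCap n δ p K G ^ (q / p))
    {u : Eucl n → ℝ} (hu : Continuous u) (hcs : HasCompactSupport u) (huG : tsupport u ⊆ G) :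
    (∫⁻ x in G, ENNReal.ofReal (|u x| ^ q * ω x) ∂volume)
      ≤ ENNReal.ofReal (C * 2 ^ (3 * q + 2 * q / p) * (1 - 2 ^ (-p) : ℝ) ^ (-(q / p))) *
          fracEnergy n δ p G u ^ (q / p) := by
  have hθ : 0 ≤ q / p := div_nonneg (hp.le.trans hpq) hp.le
  set B : ℝ := 2 ^ (p + 2) / (1 - 2 ^ (-p))
  calc _ ≤ _ := lintegral_le_mul_tsum_fracCap_rpow hp hpq hB hu hcs huG
    _ ≤ ENNReal.ofReal C * ENNReal.ofReal (2 ^ q) * (∑' j : ℤ,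
          ENNReal.ofReal ((2 ^ j) ^ p) * fracCap n δ p {x | (2 : ℝ) ^ j ≤ |u x|} G) ^ (q / p) := by
        gcongr
        exact ENNReal.tsum_rpow_le_rpow_tsum ((one_le_div hp).2 hpq) _
    _ ≤ ENNReal.ofReal C * ENNReal.ofReal (2 ^ q)
          * (ENNReal.ofReal B * fracEnergy n δ p G u) ^ (q / p) := by
        gcongr
        exact tsum_zpow_mul_fracCap_le hp hu hcs huG
    _ = ENNReal.ofReal (C * (2 ^ q * B ^ (q / p))) * fracEnergy n δ p G u ^ (q / p) := by
        have hB0 : 0 ≤ B := div_nonneg (by positivity) (one_sub_two_rpow_neg_pos hp).le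
        rw [ENNReal.mul_rpow_of_nonneg _ _ hθ, ENNReal.ofReal_rpow_of_nonneg hB0 hθ,
          ENNReal.ofReal_mul hC.le, ENNReal.ofReal_mul (by positivity)]
        ring
    _ ≤ _ := by
        rw [mul_assoc C]
        gcongr ENNReal.ofReal (C * ?_) * _
        exact two_rpow_mul_rpow_le hp hpq

end Capacity

end FracCapacity

theorem statement10_general (n : ℕ) (G : Set (Eucl n))
    (ω : Eucl n → ℝ)
    (δ p q : ℝ) (hp : 0 < p) (hpq : p ≤ q) :
    (∀ C₁ : ℝ, 0 < C₁ →
      (∀ u : Eucl n → ℝ, Continuous u → HasCompactSupport u → tsupport u ⊆ G →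
        (∫⁻ x in G, ENNReal.ofReal (|u x| ^ q * ω x) ∂volume)
          ≤ ENNReal.ofReal C₁ * fracEnergy n δ p G u ^ (q / p)) →
      (∀ K : Set (Eucl n), IsCompact K → K ⊆ G →
        (∫⁻ x in K, ENNReal.ofReal (ω x) ∂volume)
          ≤ ENNReal.ofReal C₁ * fracCap n δ p K G ^ (q / p))) ∧
    (∀ C₂ : ℝ, 0 < C₂ →
      (∀ K : Set (Eucl n), IsCompact K → K ⊆ G →
        (∫⁻ x in K, ENNReal.ofReal (ω x) ∂volume)
          ≤ ENNReal.ofReal C₂ * fracCap n δ p K G ^ (q / p)) →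
      (∀ u : Eucl n → ℝ, Continuous u → HasCompactSupport u → tsupport u ⊆ G →
        (∫⁻ x in G, ENNReal.ofReal (|u x| ^ q * ω x) ∂volume)
          ≤ ENNReal.ofReal (C₂ * 2 ^ (3 * q + 2 * q / p) * (1 - 2 ^ (-p) : ℝ) ^ (-(q / p))) *
              fracEnergy n δ p G u ^ (q / p))) :=
  ⟨fun _ hC₁ hA _ hK hKG => FracCapacity.setLIntegral_le_mul_fracCap_rpow hp hpq hC₁ hA hK hKG,
    fun _ hC₂ hB _ hu hcs huG =>
      FracCapacity.lintegral_le_mul_fracEnergy_rpow hp hpq hC₂ hB hu hcs huG⟩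

/-- Maz'ya-type characterization: for an open `G ⊆ ℝⁿ`, a measurable
weight `ω : G → [0,∞)`, `0 < δ < 1` and `0 < p ≤ q < ∞`, the weighted inequality (A) for
all `u ∈ C₀(G)` and the capacitary inequality (B) for all compact `K ⊆ G` are
equivalent; from (A) to (B) one can take `C₂ = C₁`, and from (B) to (A) one can take
`C₁ = C₂ · 2^{3q + 2q/p} (1 - 2^{-p})^{-q/p}`. -/
theorem statement10 (n : ℕ) (G : Set (Eucl n)) (hG : IsOpen G)
    (ω : Eucl n → ℝ) (hω : Measurable ω) (hω0 : ∀ x, 0 ≤ ω x)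
    (δ p q : ℝ) (hδ : δ ∈ Ioo (0:ℝ) 1) (hp : 0 < p) (hpq : p ≤ q) :
    (∀ C₁ : ℝ, 0 < C₁ →
      (∀ u : Eucl n → ℝ, Continuous u → HasCompactSupport u → tsupport u ⊆ G →
        (∫⁻ x in G, ENNReal.ofReal (|u x| ^ q * ω x) ∂volume)
          ≤ ENNReal.ofReal C₁ * fracEnergy n δ p G u ^ (q / p)) →
      (∀ K : Set (Eucl n), IsCompact K → K ⊆ G →
        (∫⁻ x in K, ENNReal.ofReal (ω x) ∂volume)
          ≤ ENNReal.ofReal C₁ * fracCap n δ p K G ^ (q / p))) ∧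
    (∀ C₂ : ℝ, 0 < C₂ →
      (∀ K : Set (Eucl n), IsCompact K → K ⊆ G →
        (∫⁻ x in K, ENNReal.ofReal (ω x) ∂volume)
          ≤ ENNReal.ofReal C₂ * fracCap n δ p K G ^ (q / p)) →
      (∀ u : Eucl n → ℝ, Continuous u → HasCompactSupport u → tsupport u ⊆ G →
        (∫⁻ x in G, ENNReal.ofReal (|u x| ^ q * ω x) ∂volume)
          ≤ ENNReal.ofReal (C₂ * 2 ^ (3 * q + 2 * q / p) * (1 - 2 ^ (-p) : ℝ) ^ (-(q / p))) *
              fracEnergy n δ p G u ^ (q / p))) :=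
  statement10_general n G ω δ p q hp hpq
end
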